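/- For every finite normal form game G with strict preferences, every initial reference point a₀ ∈ A, every positive integer k, and every admissible player function I, there exists a no-harm equilibrium of Γ(a₀,k,I) in pure strategies. -/

import Mathlib

namespace NoHarm

/-- A finite normal form game with `n` players: finite action sets `A i`,
nonempty, with decidable equality, and utility functions `u i : Profile → ℝ`. -/
structure Game (n : ℕ) where
  A : Fin n → Type
  fintypeA : ∀ i, Fintype (A i)
  decA : ∀ i, DecidableEq (A i)
  neA : ∀ i, Nonempty (A i)
  u : Fin n → (∀ i, A i) → ℝ

attribute [instance] Game.fintypeA Game.decA Game.neA

/-- Action profiles of `G`. -/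
abbrev Profile {n : ℕ} (G : Game n) : Type := ∀ i, G.A i

/-- A recorded move in the extensive form game `Γ`: the acting player together
with their choice (`none` = pass, `some a` = choose action `a`; choosing the
current component of the state is "staying", any other action is "moving"). -/
abbrev Move {n : ℕ} (G : Game n) : Type := Σ i : Fin n, Option (G.A i)

/-- A node of `Γ`, identified with the history of moves leading to it
(the root is `[]`). -/
abbrev Hist {n : ℕ} (G : Game n) : Type := List (Move G)

variable {n : ℕ}

/-- One step of the left fold computing, along a history, the triple
(current state, current reference point, player who established the current
reference point by staying -- `none` for the initial reference point). -/
def stepFold (G : Game n) (x : Profile G × Profile G × Option (Fin n)) (m : Move G) :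
    Profile G × Profile G × Option (Fin n) :=
  match m with
  | ⟨_, none⟩ => x
  | ⟨i, some a⟩ =>
    if a = x.1 i then (x.1, x.1, some i)
    else (Function.update x.1 i a, x.2.1, x.2.2)

/-- The (state, reference point, proposer) data at the node `h` of `Γ(a0,·,·)`. -/
def fold3 (G : Game n) (a0 : Profile G) (h : Hist G) :
    Profile G × Profile G × Option (Fin n) :=
  h.foldl (stepFold G) (a0, a0, none)

/-- The state `S(x)` at a node. -/
def state (G : Game n) (a0 : Profile G) (h : Hist G) : Profile G := (fold3 G a0 h).1

/-- The reference point at a node (the most recent state at which a player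
stayed, initially `a0`). -/
def refpt (G : Game n) (a0 : Profile G) (h : Hist G) : Profile G := (fold3 G a0 h).2.1

/-- The player who established the current reference point by staying
(`none` if it is still the initial reference point `a0`). -/
def proposer (G : Game n) (a0 : Profile G) (h : Hist G) : Option (Fin n) :=
  (fold3 G a0 h).2.2

/-- `m` is a stay action at the node `h`: the mover chooses exactly the
component of the current state belonging to them. -/
def IsStay (G : Game n) (a0 : Profile G) (h : Hist G) (m : Move G) : Prop :=
  m.2 = some (state G a0 h m.1)

/-- Termination condition (i): one player stayed at a state `b`, making it
the reference point, and a different player subsequently also stays at `b`. -/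
def TerminalStay (G : Game n) (a0 : Profile G) (h : Hist G) : Prop :=
  ∃ (h' : Hist G) (m : Move G) (i : Fin n),
    h = h' ++ [m] ∧ IsStay G a0 h' m ∧ refpt G a0 h' = state G a0 h' ∧
    proposer G a0 h' = some i ∧ i ≠ m.1

/-- Termination condition (ii): all `n` players consecutively pass
(the last `n` moves are passes and every player is among their movers). -/
def TerminalPass (G : Game n) (h : Hist G) : Prop :=
  n ≤ h.length ∧ (∀ m ∈ h.drop (h.length - n), m.2 = none) ∧
    (∀ i : Fin n, ∃ m ∈ h.drop (h.length - n), m.1 = i)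

/-- Terminal nodes of `Γ(a0,·,·)`. -/
def Terminal (G : Game n) (a0 : Profile G) (h : Hist G) : Prop :=
  TerminalStay G a0 h ∨ TerminalPass G h

/-- Number of predecessor nodes of `h` having the same state as `h` at which
the move `m` was made. -/
def countAct (G : Game n) (a0 : Profile G) (h : Hist G) (m : Move G) : ℕ :=
  ((Finset.range h.length).filter
    (fun t => h[t]? = some m ∧ state G a0 (h.take t) = state G a0 h)).card

/-- Availability of the choice `c` for player `i` at node `h`: pass is always
available, and an action `a` is available iff `i` has chosen `a` at fewer than
`k` predecessor nodes carrying the same state as `h`. -/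
def availAct (G : Game n) (a0 : Profile G) (k : ℕ) (h : Hist G) {i : Fin n}
    (c : Option (G.A i)) : Prop :=
  ∀ a : G.A i, c = some a → countAct G a0 h ⟨i, some a⟩ < k

/-- `h` is a (valid) node of the game tree of `Γ(a0,k,I)`: at each step the
recorded mover is the active player given by the player function `I`, the
chosen action was available, and no proper predecessor is terminal. -/
structure IsNode (G : Game n) (a0 : Profile G) (k : ℕ) (I : Hist G → Fin n)
    (h : Hist G) : Prop where
  mover : ∀ (t : ℕ) (ht : t < h.length), (h.get ⟨t, ht⟩).1 = I (h.take t)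
  avail : ∀ (t : ℕ) (ht : t < h.length), availAct G a0 k (h.take t) (h.get ⟨t, ht⟩).2
  nonterm : ∀ t < h.length, ¬ Terminal G a0 (h.take t)

/-- The player function is admissible: along every path of play the numbers of
nodes at which any two players have been active differ by at most one. -/
def Admissible (G : Game n) (a0 : Profile G) (k : ℕ) (I : Hist G → Fin n) : Prop :=
  ∀ h, IsNode G a0 k I h → ∀ i j : Fin n,
    (h.map Sigma.fst).count i ≤ (h.map Sigma.fst).count j + 1

/-- A pure strategy of player `i`: a choice (pass or an action) at every node. -/
abbrev Strategy (G : Game n) (i : Fin n) : Type := Hist G → Option (G.A i)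

/-- A pure strategy profile. -/
abbrev StratProfile (G : Game n) : Type := ∀ i, Strategy G i

/-- A strategy profile is valid if at every non-terminal node of the tree the
active player's prescribed choice is available. -/
def ValidProfile (G : Game n) (a0 : Profile G) (k : ℕ) (I : Hist G → Fin n)
    (σ : StratProfile G) : Prop :=
  ∀ h, IsNode G a0 k I h → ¬ Terminal G a0 h → availAct G a0 k h (σ (I h) h)

open Classical in
/-- Play according to `σ` for (at most) the given number of steps from a node,
stopping at terminal nodes. -/
noncomputable def playN (G : Game n) (a0 : Profile G) (I : Hist G → Fin n)
    (σ : StratProfile G) : ℕ → Hist G → Hist G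
  | 0, h => h
  | (t + 1), h =>
    if Terminal G a0 h then h
    else playN G a0 I σ t (h ++ [⟨I h, σ (I h) h⟩])

/-- A (generous) upper bound for the length of any play of `Γ(a0,k,I)`. -/
def bound (G : Game n) (k : ℕ) : ℕ :=
  ((k + 2) * (Fintype.card (Profile G) + 2) * ((∑ i, Fintype.card (G.A i)) + 2) + 2)
    * (n + 2) * 4

/-- The outcome of `σ` in the subgame rooted at `h`: the reference point at the
terminal node reached by playing `σ` from `h`. -/
noncomputable def outcomeFrom (G : Game n) (a0 : Profile G) (k : ℕ)
    (I : Hist G → Fin n) (σ : StratProfile G) (h : Hist G) : Profile G :=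
  refpt G a0 (playN G a0 I σ (bound G k + 1) h)

/-- The outcome of the strategy profile `σ` in `Γ(a0,k,I)`. -/
noncomputable def outcome (G : Game n) (a0 : Profile G) (k : ℕ)
    (I : Hist G → Fin n) (σ : StratProfile G) : Profile G :=
  outcomeFrom G a0 k I σ []

/-- `σ` satisfies the no-harm principle: every stay action it prescribes, at
every (on- or off-path) non-terminal node of the tree, does not harm any other
player relative to the reference point at that node. -/
def SatNHP (G : Game n) (a0 : Profile G) (k : ℕ) (I : Hist G → Fin n)
    (σ : StratProfile G) : Prop :=
  ∀ h, IsNode G a0 k I h → ¬ Terminal G a0 h →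
    σ (I h) h = some (state G a0 h (I h)) →
    ∀ j, j ≠ I h → G.u j (refpt G a0 h) ≤ G.u j (state G a0 h)

/-- No-harm equilibrium of `Γ(a0,k,I)`: a valid strategy profile satisfying the
NHP such that at every non-terminal node the active player's choice is a best
response among deviations keeping the profile valid and NHP-compliant. -/
def NHE (G : Game n) (a0 : Profile G) (k : ℕ) (I : Hist G → Fin n)
    (σ : StratProfile G) : Prop :=
  ValidProfile G a0 k I σ ∧ SatNHP G a0 k I σ ∧
  ∀ h, IsNode G a0 k I h → ¬ Terminal G a0 h →
    ∀ τ : Strategy G (I h),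
      ValidProfile G a0 k I (Function.update σ (I h) τ) →
      SatNHP G a0 k I (Function.update σ (I h) τ) →
      G.u (I h) (outcomeFrom G a0 k I (Function.update σ (I h) τ) h) ≤
        G.u (I h) (outcomeFrom G a0 k I σ h)

/-- Subgame perfect equilibrium of `Γ(a0,k,I)` (no NHP constraint). -/
def SPE (G : Game n) (a0 : Profile G) (k : ℕ) (I : Hist G → Fin n)
    (σ : StratProfile G) : Prop :=
  ValidProfile G a0 k I σ ∧
  ∀ h, IsNode G a0 k I h → ¬ Terminal G a0 h →
    ∀ τ : Strategy G (I h),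
      ValidProfile G a0 k I (Function.update σ (I h) τ) →
      G.u (I h) (outcomeFrom G a0 k I (Function.update σ (I h) τ) h) ≤
        G.u (I h) (outcomeFrom G a0 k I σ h)

/-- `b` Pareto dominates `a`. -/
def ParetoDom (G : Game n) (b a : Profile G) : Prop :=
  (∀ i, G.u i a ≤ G.u i b) ∧ ∃ i, G.u i a < G.u i b

/-- `a` is Pareto optimal. -/
def ParetoOpt (G : Game n) (a : Profile G) : Prop := ∀ b, ¬ ParetoDom G b a

/-- `b` strictly Pareto dominates `a`. -/
def StrictDom (G : Game n) (b a : Profile G) : Prop := ∀ i, G.u i a < G.u i b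

/-- `a` is weakly Pareto optimal. -/
def WeakParetoOpt (G : Game n) (a : Profile G) : Prop := ∀ b, ¬ StrictDom G b a

/-- Preferences are strict: each utility function is injective on profiles. -/
def StrictPrefs (G : Game n) : Prop := ∀ i, Function.Injective (G.u i)



/-! ### Auxiliary development for the existence theorem -/

section Existence

open scoped Classical

variable {n : ℕ} (G : Game n) (a0 : Profile G) (k : ℕ) (I : Hist G → Fin n)

lemma isNode_take {h : Hist G} (hh : IsNode G a0 k I h) {t : ℕ} (ht : t ≤ h.length) :
    IsNode G a0 k I (h.take t) := by
  have hlen : (h.take t).length = t := by simp [ht]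
  refine ⟨?_, ?_, ?_⟩
  · intro s hs
    have hst : s < t := by omega
    have hs' : s < h.length := by omega
    have h1 : (h.take t).get ⟨s, hs⟩ = h.get ⟨s, hs'⟩ := by
      simp [List.get_eq_getElem, List.getElem_take]
    have h2 : (h.take t).take s = h.take s := by
      rw [List.take_take, Nat.min_eq_left (le_of_lt hst)]
    rw [h1, h2]; exact hh.mover s hs'
  · intro s hs
    have hst : s < t := by omega
    have hs' : s < h.length := by omega
    have h1 : (h.take t).get ⟨s, hs⟩ = h.get ⟨s, hs'⟩ := by
      simp [List.get_eq_getElem, List.getElem_take]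
    have h2 : (h.take t).take s = h.take s := by
      rw [List.take_take, Nat.min_eq_left (le_of_lt hst)]
    rw [h1, h2]; exact hh.avail s hs'
  · intro s hs
    have hst : s < t := by omega
    have hs' : s < h.length := by omega
    have h2 : (h.take t).take s = h.take s := by
      rw [List.take_take, Nat.min_eq_left (le_of_lt hst)]
    rw [h2]; exact hh.nonterm s hs'

lemma isNode_append {h : Hist G} (hh : IsNode G a0 k I h) (hnt : ¬ Terminal G a0 h)
    {c : Option (G.A (I h))} (hav : availAct G a0 k h c) :
    IsNode G a0 k I (h ++ [⟨I h, c⟩]) := by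
  set mv : Move G := ⟨I h, c⟩ with hmv
  have hlen : (h ++ [mv]).length = h.length + 1 := by simp
  have htake : ∀ t ≤ h.length, (h ++ [mv]).take t = h.take t := by
    intro t ht; exact List.take_append_of_le_length ht
  have htakeL : (h ++ [mv]).take h.length = h := by
    rw [htake h.length le_rfl, List.take_length]
  refine ⟨?_, ?_, ?_⟩
  · intro t ht
    rcases Nat.lt_or_ge t h.length with h1 | h1
    · have hget : (h ++ [mv]).get ⟨t, ht⟩ = h.get ⟨t, h1⟩ := by
        simp [List.get_eq_getElem, List.getElem_append_left h1]
      rw [hget, htake t (le_of_lt h1)]; exact hh.mover t h1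
    · have heq : t = h.length := by omega
      subst heq
      have hget : (h ++ [mv]).get ⟨h.length, ht⟩ = mv :=
        List.getElem_concat_length (l := h) (a := mv) (i := h.length) rfl ht
      rw [hget, htakeL]
  · intro t ht
    rcases Nat.lt_or_ge t h.length with h1 | h1
    · have hget : (h ++ [mv]).get ⟨t, ht⟩ = h.get ⟨t, h1⟩ := by
        simp [List.get_eq_getElem, List.getElem_append_left h1]
      rw [hget, htake t (le_of_lt h1)]; exact hh.avail t h1
    · have heq : t = h.length := by omega
      subst heq
      have hget : (h ++ [mv]).get ⟨h.length, ht⟩ = mv :=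
        List.getElem_concat_length (l := h) (a := mv) (i := h.length) rfl ht
      rw [hget, htakeL]; exact hav
  · intro t ht
    rcases Nat.lt_or_ge t h.length with h1 | h1
    · rw [htake t (le_of_lt h1)]; exact hh.nonterm t h1
    · have heq : t = h.length := by omega
      subst heq; rw [htakeL]; exact hnt

lemma sum_count_eq_length (l : List (Fin n)) : ∑ i : Fin n, l.count i = l.length := by
  induction l with
  | nil => simp
  | cons a l ih =>
    simp only [List.count_cons, beq_iff_eq, List.length_cons]
    rw [Finset.sum_add_distrib, ih]
    congr 1
    rw [Finset.sum_ite_eq Finset.univ a (fun _ => 1)]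
    simp

lemma counts_eq (hadm : Admissible G a0 k I) (hn : 0 < n) {h : Hist G}
    (hh : IsNode G a0 k I h) {q : ℕ} (hlen : h.length = q * n) (i : Fin n) :
    (h.map Sigma.fst).count i = q := by
  set f : Fin n → ℕ := fun j => (h.map Sigma.fst).count j with hf
  have hsum : ∑ j : Fin n, f j = q * n := by
    have := sum_count_eq_length (h.map Sigma.fst)
    rw [List.length_map, hlen] at this
    exact this
  have hpair : ∀ i j : Fin n, f i ≤ f j + 1 := fun i j => hadm h hh i j
  obtain ⟨j0, _, hj0⟩ := Finset.exists_min_image Finset.univ f ⟨i, Finset.mem_univ i⟩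
  have hlow : n * f j0 ≤ q * n := by
    calc n * f j0 = Finset.univ.card • f j0 := by simp [Finset.card_univ, smul_eq_mul]
    _ ≤ ∑ j : Fin n, f j := Finset.card_nsmul_le_sum _ _ _ (fun x hx => hj0 x hx)
    _ = q * n := hsum
  have hhigh : q * n ≤ n * (f j0 + 1) := by
    calc q * n = ∑ j : Fin n, f j := hsum.symm
    _ ≤ Finset.univ.card • (f j0 + 1) :=
        Finset.sum_le_card_nsmul _ _ _ (fun x _ => hpair x j0)
    _ = n * (f j0 + 1) := by simp [Finset.card_univ, smul_eq_mul]
  have h1 : f j0 ≤ q := by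
    have := Nat.le_of_mul_le_mul_left (hlow.trans_eq (mul_comm q n)) hn
    exact this
  have h2 : q ≤ f j0 + 1 := by
    have h' : n * q ≤ n * (f j0 + 1) := (mul_comm q n) ▸ hhigh
    exact Nat.le_of_mul_le_mul_left h' hn
  rcases Nat.eq_or_lt_of_le h1 with hq | hq
  · -- q = f j0 : all values ≥ q and sum = n*q, forces equality
    have hle : ∀ x ∈ Finset.univ, (fun _ : Fin n => q) x ≤ f x := by
      intro x hx; rw [← hq] at *; exact hj0 x hx
    have hsums : ∑ _x : Fin n, q = ∑ x : Fin n, f x := by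
      rw [hsum]; simp [Finset.card_univ, mul_comm]
    have := (Finset.sum_eq_sum_iff_of_le hle).mp hsums i (Finset.mem_univ i)
    exact this.symm
  · -- f j0 < q so q = f j0 + 1 : all values ≤ q and sum = n*q
    have hq' : q = f j0 + 1 := by omega
    have hle : ∀ x ∈ Finset.univ, f x ≤ (fun _ : Fin n => q) x := by
      intro x _; rw [hq']; exact hpair x j0
    have hsums : ∑ x : Fin n, f x = ∑ _x : Fin n, q := by
      rw [hsum]; simp [Finset.card_univ, mul_comm]
    exact (Finset.sum_eq_sum_iff_of_le hle).mp hsums i (Finset.mem_univ i)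

/-- The non-pass predicate on positions of `h`. -/
def NonPass (h : Hist G) (t : ℕ) : Prop :=
  ∃ (i : Fin n) (a : G.A i), h[t]? = some ⟨i, some a⟩

/-- Every aligned block of `n` consecutive moves strictly inside a node
contains a non-pass move. -/
lemma block_has_nonpass (hadm : Admissible G a0 k I) (hn : 0 < n) {h : Hist G}
    (hh : IsNode G a0 k I h) {q : ℕ} (hq : (q + 1) * n < h.length) :
    ∃ t, q * n ≤ t ∧ t < (q + 1) * n ∧ NonPass G h t := by
  have hsm : (q + 1) * n = q * n + n := Nat.succ_mul q n
  by_contra hcon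
  push_neg at hcon
  have hpass : ∀ t, q * n ≤ t → t < (q + 1) * n → ∀ (ht : t < h.length), (h.get ⟨t, ht⟩).2 = none := by
    intro t h1 h2 ht
    have hnp := hcon t h1 h2
    rcases hm : (h.get ⟨t, ht⟩) with ⟨i, o⟩
    rcases o with _ | a
    · rfl
    · exfalso
      apply hnp
      refine ⟨i, a, ?_⟩
      rw [List.getElem?_eq_getElem ht]
      rw [← hm]
      simp [List.get_eq_getElem]
  set h' := h.take ((q + 1) * n) with hh'
  have hlen' : h'.length = (q + 1) * n := by
    simp [hh', Nat.min_eq_left (le_of_lt hq)]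
  have hnode' : IsNode G a0 k I h' := isNode_take G a0 k I hh (le_of_lt hq)
  set h'' := h.take (q * n) with hh''
  have hqn : q * n ≤ (q + 1) * n := Nat.mul_le_mul_right n (by omega)
  have hlen'' : h''.length = q * n := by
    simp [hh'', Nat.min_eq_left (le_of_lt (lt_of_le_of_lt hqn hq))]
  have hnode'' : IsNode G a0 k I h'' := isNode_take G a0 k I hh (le_of_lt (lt_of_le_of_lt hqn hq))
  set D := h'.drop (q * n) with hD
  have htake'' : h'.take (q * n) = h'' := by
    rw [hh', List.take_take, Nat.min_eq_left hqn]
  have hsplit : h'' ++ D = h' := by rw [← htake'']; exact List.take_append_drop _ _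
  have hlenD : D.length = n := by
    have := congrArg List.length hsplit
    simp only [List.length_append] at this
    omega
  have hDidx : ∀ (j : ℕ) (hj : j < D.length), D.get ⟨j, hj⟩ = h.get ⟨q * n + j,
      by rw [hlenD] at hj; omega⟩ := by
    intro j hj
    have hj' : q * n + j < h'.length := by rw [hlenD] at hj; omega
    have e1 : D.get ⟨j, hj⟩ = h'.get ⟨q * n + j, hj'⟩ := by
      simp [hD, List.get_eq_getElem, List.getElem_drop]
    have hj'' : q * n + j < h.length := by rw [hlenD] at hj; omega
    have e2 : h'.get ⟨q * n + j, hj'⟩ = h.get ⟨q * n + j, hj''⟩ := by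
      simp [hh', List.get_eq_getElem, List.getElem_take]
    rw [e1, e2]
  have hterm : Terminal G a0 h' := by
    right
    have hdrop : h'.drop (h'.length - n) = D := by
      rw [hlen']; congr 1; omega
    refine ⟨?_, ?_, ?_⟩
    · rw [hlen']; calc n = 1 * n := (one_mul n).symm
        _ ≤ (q + 1) * n := Nat.mul_le_mul_right n (by omega)
    · rw [hdrop]
      intro m hm
      obtain ⟨j, hjm⟩ := List.mem_iff_get.mp hm
      rw [hDidx j.1 j.2] at hjm
      have hlt : q * n + j.1 < (q + 1) * n := by
        have h2 := j.2; omega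
      rw [← hjm]
      exact hpass (q * n + j.1) (by omega) hlt _
    · rw [hdrop]
      intro i
      have hc1 : (h'.map Sigma.fst).count i = q + 1 :=
        counts_eq G a0 k I hadm hn hnode' hlen' i
      have hc2 : (h''.map Sigma.fst).count i = q :=
        counts_eq G a0 k I hadm hn hnode'' hlen'' i
      have hcD : (D.map Sigma.fst).count i = 1 := by
        have : ((h'' ++ D).map Sigma.fst).count i = q + 1 := by rw [hsplit]; exact hc1
        rw [List.map_append, List.count_append, hc2] at this
        omega
      have hmem : i ∈ D.map Sigma.fst := by
        have : 0 < (D.map Sigma.fst).count i := by omega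
        exact List.count_pos_iff.mp this
      obtain ⟨m, hm, hmi⟩ := List.mem_map.mp hmem
      exact ⟨m, hm, hmi⟩
  exact hh.nonterm ((q + 1) * n) hq hterm

/-- The number of non-pass positions in a node is at most
`k * card(Profile) * (card(Σ i, A i) + 1)`. -/
lemma card_nonpass_le {h : Hist G} (hh : IsNode G a0 k I h) :
    ((Finset.range h.length).filter (NonPass G h)).card ≤
      k * (Fintype.card (Profile G) * (Fintype.card ((i : Fin n) × G.A i) + 1)) := by
  classical
  set Qset := (Finset.range h.length).filter (NonPass G h) with hQ
  set φ : ℕ → Profile G × Option ((i : Fin n) × G.A i) := fun t =>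
    (state G a0 (h.take t), (h[t]?).bind (fun m => m.2.map (fun a => ⟨m.1, a⟩))) with hφ
  have hfiber : ∀ b ∈ Finset.image φ Qset, (Qset.filter (fun t => φ t = b)).card ≤ k := by
    intro b _
    by_contra hgt
    push_neg at hgt
    set F := Qset.filter (fun t => φ t = b) with hF
    have hFne : F.Nonempty := Finset.card_pos.mp (by omega)
    -- shape of b
    obtain ⟨t0, ht0⟩ := hFne
    have ht0' := Finset.mem_filter.mp ht0
    obtain ⟨i, a, hia⟩ := (Finset.mem_filter.mp ht0'.1).2
    have hb2 : b.2 = some ⟨i, a⟩ := by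
      have := ht0'.2
      rw [hφ] at this
      have h2 := congrArg Prod.snd this
      simp only at h2
      rw [hia] at h2
      simpa using h2.symm
    -- every member of F has the same move and a state dependent only on b
    have hFprop : ∀ t ∈ F, h[t]? = some ⟨i, some a⟩ ∧ state G a0 (h.take t) = b.1 := by
      intro t htF
      have htF' := Finset.mem_filter.mp htF
      obtain ⟨i', a', hia'⟩ := (Finset.mem_filter.mp htF'.1).2
      have hphi := htF'.2
      have h2 := congrArg Prod.snd hphi
      have h1 := congrArg Prod.fst hphi
      simp only [hφ] at h1 h2
      rw [hia'] at h2
      simp at h2  -- h2 : some ⟨i',a'⟩ = b.2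
      rw [hb2] at h2
      have hsig : (⟨i', a'⟩ : (i : Fin n) × G.A i) = ⟨i, a⟩ := by
        injection h2
      obtain ⟨hi, ha⟩ := Sigma.mk.inj_iff.mp hsig
      subst hi
      have ha' : a' = a := by
        simpa using ha
      subst ha'
      exact ⟨hia', h1⟩
    set t' := F.max' ⟨t0, ht0⟩ with ht'
    have ht'F : t' ∈ F := F.max'_mem _
    have ht'rng : t' < h.length := by
      have := (Finset.mem_filter.mp (Finset.mem_filter.mp ht'F).1).1
      exact Finset.mem_range.mp this
    have hget : h.get ⟨t', ht'rng⟩ = ⟨i, some a⟩ := by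
      have := (hFprop t' ht'F).1
      rw [List.getElem?_eq_getElem ht'rng] at this
      have := Option.some.inj this
      simpa [List.get_eq_getElem] using this
    have havail := hh.avail t' ht'rng
    rw [hget] at havail
    have hcount : countAct G a0 (h.take t') ⟨i, some a⟩ < k := havail a rfl
    -- but F.erase t' injects into the counted set
    have hsub : F.erase t' ⊆ (Finset.range (h.take t').length).filter
        (fun s => (h.take t')[s]? = some ⟨i, some a⟩ ∧
          state G a0 ((h.take t').take s) = state G a0 (h.take t')) := by
      intro s hs
      have hsF := Finset.mem_erase.mp hs
      have hslt : s < t' := lt_of_le_of_ne (F.le_max' s hsF.2) hsF.1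
      have hprop := hFprop s hsF.2
      have hlen : (h.take t').length = t' := by simp [Nat.min_eq_left (le_of_lt ht'rng)]
      refine Finset.mem_filter.mpr ⟨Finset.mem_range.mpr (by omega), ?_, ?_⟩
      · rw [List.getElem?_take]
        rw [if_pos hslt]
        exact hprop.1
      · rw [List.take_take, Nat.min_eq_left (le_of_lt hslt)]
        rw [hprop.2, (hFprop t' ht'F).2]
    have hcard : k ≤ (F.erase t').card := by
      rw [Finset.card_erase_of_mem ht'F]
      omega
    have : k ≤ countAct G a0 (h.take t') ⟨i, some a⟩ := by
      calc k ≤ (F.erase t').card := hcard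
      _ ≤ _ := Finset.card_le_card hsub
    omega
  calc Qset.card ≤ k * (Finset.image φ Qset).card :=
        Finset.card_le_mul_card_image Qset k hfiber
  _ ≤ k * (Fintype.card (Profile G) * (Fintype.card ((i : Fin n) × G.A i) + 1)) := by
      apply Nat.mul_le_mul_left
      calc (Finset.image φ Qset).card
          ≤ Fintype.card (Profile G × Option ((i : Fin n) × G.A i)) := Finset.card_le_univ _
      _ = Fintype.card (Profile G) * (Fintype.card ((i : Fin n) × G.A i) + 1) := by
          simp [Fintype.card_prod, Fintype.card_option]

/-- Every node of the game tree has length at most `bound G k`. -/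
lemma length_le_bound (hadm : Admissible G a0 k I) (hn : 0 < n) {h : Hist G}
    (hh : IsNode G a0 k I h) : h.length ≤ bound G k := by
  classical
  set P := Fintype.card (Profile G) with hP
  set S := Fintype.card ((i : Fin n) × G.A i) with hS
  set Q := ((Finset.range h.length).filter (NonPass G h)).card with hQdef
  have hQ : Q ≤ k * (P * (S + 1)) := card_nonpass_le G a0 k I hh
  have hlen : h.length < (Q + 2) * n := by
    by_contra hge
    push_neg at hge
    have hex : ∀ q, ∃ t, q < Q + 1 → (q * n ≤ t ∧ t < (q + 1) * n ∧ NonPass G h t) := by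
      intro q
      by_cases hq : q < Q + 1
      · have hlt : (q + 1) * n < h.length := by
          calc (q + 1) * n < (Q + 2) * n := (Nat.mul_lt_mul_right hn).mpr (by omega)
          _ ≤ h.length := hge
        obtain ⟨t, h1, h2, h3⟩ := block_has_nonpass G a0 k I hadm hn hh hlt
        exact ⟨t, fun _ => ⟨h1, h2, h3⟩⟩
      · exact ⟨0, fun hc => absurd hc hq⟩
    choose T hT using hex
    have hinj : (Finset.range (Q + 1)).card ≤
        ((Finset.range h.length).filter (NonPass G h)).card := by
      apply Finset.card_le_card_of_injOn T
      · intro q hq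
        have hq' := Finset.mem_range.mp hq
        obtain ⟨h1, h2, h3⟩ := hT q hq'
        refine Finset.mem_filter.mpr ⟨Finset.mem_range.mpr ?_, h3⟩
        calc T q < (q + 1) * n := h2
        _ ≤ (Q + 1) * n := Nat.mul_le_mul_right n (by omega)
        _ < (Q + 2) * n := (Nat.mul_lt_mul_right hn).mpr (by omega)
        _ ≤ h.length := hge
      · intro q hq q' hq' heq
        have hq1 := Finset.mem_range.mp (Finset.mem_coe.mp hq)
        have hq1' := Finset.mem_range.mp (Finset.mem_coe.mp hq')
        obtain ⟨a1, a2, _⟩ := hT q hq1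
        obtain ⟨b1, b2, _⟩ := hT q' hq1'
        rw [heq] at a1 a2
        by_contra hne
        rcases Nat.lt_or_ge q q' with hlt | hge2
        · have : (q + 1) * n ≤ q' * n := Nat.mul_le_mul_right n (by omega)
          omega
        · have hlt : q' < q := by omega
          have : (q' + 1) * n ≤ q * n := Nat.mul_le_mul_right n (by omega)
          omega
    rw [Finset.card_range] at hinj
    omega
  have harith : (Q + 2) * n ≤ bound G k := by
    have hf1 : Q + 2 ≤ (k + 2) * (P + 2) * (S + 2) + 2 := by
      have : k * (P * (S + 1)) ≤ (k + 2) * (P + 2) * (S + 2) := by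
        calc k * (P * (S + 1)) = k * P * (S + 1) := by ring
        _ ≤ (k + 2) * (P + 2) * (S + 2) := by
            apply Nat.mul_le_mul
            apply Nat.mul_le_mul <;> omega
            omega
      omega
    have hSsum : (∑ i, Fintype.card (G.A i)) = S := by
      rw [hS, Fintype.card_sigma]
    unfold bound
    rw [hSsum]
    calc (Q + 2) * n ≤ ((k + 2) * (P + 2) * (S + 2) + 2) * n :=
          Nat.mul_le_mul_right n hf1
    _ ≤ ((k + 2) * (P + 2) * (S + 2) + 2) * ((n + 2) * 4) := by
        apply Nat.mul_le_mul_left; omega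
    _ = ((k + 2) * (P + 2) * (S + 2) + 2) * (n + 2) * 4 := by ring
  omega

/-! ### Play lemmas -/

variable (σ : StratProfile G)

lemma playN_zero (h : Hist G) : playN G a0 I σ 0 h = h := rfl

lemma playN_succ_of_terminal {h : Hist G} (hterm : Terminal G a0 h) (t : ℕ) :
    playN G a0 I σ (t + 1) h = h := by
  rw [playN]; exact if_pos hterm

lemma playN_succ_of_not_terminal {h : Hist G} (hterm : ¬ Terminal G a0 h) (t : ℕ) :
    playN G a0 I σ (t + 1) h = playN G a0 I σ t (h ++ [⟨I h, σ (I h) h⟩]) := by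
  rw [playN]; exact if_neg hterm

lemma playN_of_terminal {h : Hist G} (hterm : Terminal G a0 h) (t : ℕ) :
    playN G a0 I σ t h = h := by
  cases t with
  | zero => rfl
  | succ t => exact playN_succ_of_terminal G a0 I σ hterm t

lemma playN_add (t s : ℕ) (h : Hist G) :
    playN G a0 I σ (t + s) h = playN G a0 I σ s (playN G a0 I σ t h) := by
  induction t generalizing h with
  | zero => rw [Nat.zero_add]; rfl
  | succ t ih =>
    by_cases hterm : Terminal G a0 h
    · rw [playN_of_terminal G a0 I σ hterm (t + 1 + s),
        playN_succ_of_terminal G a0 I σ hterm,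
        playN_of_terminal G a0 I σ hterm s]
    · have e : t + 1 + s = (t + s) + 1 := by omega
      rw [e, playN_succ_of_not_terminal G a0 I σ hterm,
        playN_succ_of_not_terminal G a0 I σ hterm, ih]

lemma playN_node (hval : ValidProfile G a0 k I σ) :
    ∀ (t : ℕ) {h : Hist G}, IsNode G a0 k I h →
      ¬ Terminal G a0 (playN G a0 I σ t h) →
      IsNode G a0 k I (playN G a0 I σ t h) ∧
        (playN G a0 I σ t h).length = h.length + t := by
  intro t
  induction t with
  | zero => intro h hh _; rw [playN_zero]; exact ⟨hh, rfl⟩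
  | succ t ih =>
    intro h hh hnt
    by_cases hterm : Terminal G a0 h
    · rw [playN_of_terminal G a0 I σ hterm] at hnt
      exact absurd hterm hnt
    · rw [playN_succ_of_not_terminal G a0 I σ hterm] at hnt ⊢
      have hnode' : IsNode G a0 k I (h ++ [⟨I h, σ (I h) h⟩]) :=
        isNode_append G a0 k I hh hterm (hval h hh hterm)
      obtain ⟨h1, h2⟩ := ih hnode' hnt
      refine ⟨h1, ?_⟩
      rw [h2]; simp; omega

lemma playN_terminal (hadm : Admissible G a0 k I) (hn : 0 < n)
    (hval : ValidProfile G a0 k I σ) {h : Hist G} (hh : IsNode G a0 k I h) (t : ℕ)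
    (hbig : bound G k < h.length + t) : Terminal G a0 (playN G a0 I σ t h) := by
  by_contra hnt
  obtain ⟨hnode, hlen⟩ := playN_node G a0 k I σ hval t hh hnt
  have := length_le_bound G a0 k I hadm hn hnode
  omega

lemma outcomeFrom_of_terminal {h : Hist G} (hterm : Terminal G a0 h) :
    outcomeFrom G a0 k I σ h = refpt G a0 h := by
  unfold outcomeFrom
  rw [playN_of_terminal G a0 I σ hterm]

lemma outcomeFrom_step (hadm : Admissible G a0 k I) (hn : 0 < n)
    (hval : ValidProfile G a0 k I σ) {h : Hist G} (hh : IsNode G a0 k I h)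
    (hnt : ¬ Terminal G a0 h) :
    outcomeFrom G a0 k I σ h = outcomeFrom G a0 k I σ (h ++ [⟨I h, σ (I h) h⟩]) := by
  unfold outcomeFrom
  rw [playN_succ_of_not_terminal G a0 I σ hnt]
  set h' := h ++ [⟨I h, σ (I h) h⟩] with hh'
  have hnode' : IsNode G a0 k I h' := isNode_append G a0 k I hh hnt (hval h hh hnt)
  have hlen' : 1 ≤ h'.length := by simp [hh']
  have hterm' : Terminal G a0 (playN G a0 I σ (bound G k) h') :=
    playN_terminal G a0 k I σ hadm hn hval hnode' (bound G k) (by omega)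
  rw [playN_add G a0 I σ (bound G k) 1 h',
    playN_succ_of_terminal G a0 I σ hterm']

/-! ### The backward-induction value and strategy -/

/-- Choices allowed for the active player at `h`: available, and if a stay,
satisfying the no-harm principle. -/
noncomputable def AllowedF (h : Hist G) : Finset (Option (G.A (I h))) :=
  Finset.univ.filter (fun c => availAct G a0 k h c ∧
    (c = some (state G a0 h (I h)) →
      ∀ j, j ≠ I h → G.u j (refpt G a0 h) ≤ G.u j (state G a0 h)))

lemma none_mem_AllowedF (h : Hist G) : none ∈ AllowedF G a0 k I h := by
  refine Finset.mem_filter.mpr ⟨Finset.mem_univ _, ?_, ?_⟩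
  · intro a ha; cases ha
  · intro ha; cases ha

lemma exMax (F : Hist G → Profile G) (h : Hist G) :
    ∃ c ∈ AllowedF G a0 k I h, ∀ c' ∈ AllowedF G a0 k I h,
      G.u (I h) (F (h ++ [⟨I h, c'⟩])) ≤ G.u (I h) (F (h ++ [⟨I h, c⟩])) :=
  Finset.exists_max_image _ _ ⟨none, none_mem_AllowedF G a0 k I h⟩

/-- An optimal allowed choice at `h`, given the continuation value `F`. -/
noncomputable def pickOf (F : Hist G → Profile G) (h : Hist G) : Option (G.A (I h)) :=
  Classical.choose (exMax G a0 k I F h)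

/-- The nodes at which the constructed strategy acts nontrivially. -/
def NodeCond (h : Hist G) : Prop :=
  IsNode G a0 k I h ∧ ¬ Terminal G a0 h ∧ h.length ≤ bound G k

/-- Backward-induction value with explicit fuel. -/
noncomputable def valF : ℕ → Hist G → Profile G
  | 0, h => refpt G a0 h
  | (t + 1), h =>
    if NodeCond G a0 k I h then
      valF t (h ++ [⟨I h, pickOf G a0 k I (valF t) h⟩])
    else refpt G a0 h

/-- Backward-induction value of a node. -/
noncomputable def val (h : Hist G) : Profile G :=
  valF G a0 k I (bound G k + 1 - h.length) h

/-- The constructed choice at a node. -/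
noncomputable def pick (h : Hist G) : Option (G.A (I h)) :=
  pickOf G a0 k I (valF G a0 k I (bound G k - h.length)) h

lemma val_of_not_cond {h : Hist G} (hc : ¬ NodeCond G a0 k I h) :
    val G a0 k I h = refpt G a0 h := by
  unfold val
  cases hb : bound G k + 1 - h.length with
  | zero => rfl
  | succ t => rw [valF]; exact if_neg hc

lemma val_children {h : Hist G} (c : Option (G.A (I h))) :
    val G a0 k I (h ++ [⟨I h, c⟩]) = valF G a0 k I (bound G k - h.length) (h ++ [⟨I h, c⟩]) := by
  unfold val
  have e : bound G k + 1 - (h ++ [(⟨I h, c⟩ : Move G)]).length = bound G k - h.length := by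
    simp only [List.length_append, List.length_singleton]
    omega
  rw [e]

lemma val_step {h : Hist G} (hc : NodeCond G a0 k I h) :
    val G a0 k I h = val G a0 k I (h ++ [⟨I h, pick G a0 k I h⟩]) := by
  have hlen : h.length ≤ bound G k := hc.2.2
  have h1 : bound G k + 1 - h.length = (bound G k - h.length) + 1 := by omega
  rw [val_children]
  unfold val
  rw [h1, valF, if_pos hc]
  rfl

lemma pick_spec (h : Hist G) :
    pick G a0 k I h ∈ AllowedF G a0 k I h ∧ ∀ c' ∈ AllowedF G a0 k I h,
      G.u (I h) (val G a0 k I (h ++ [⟨I h, c'⟩])) ≤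
        G.u (I h) (val G a0 k I (h ++ [⟨I h, pick G a0 k I h⟩])) := by
  have hs := Classical.choose_spec (exMax G a0 k I (valF G a0 k I (bound G k - h.length)) h)
  refine ⟨hs.1, fun c' hc' => ?_⟩
  rw [val_children, val_children]
  exact hs.2 c' hc'

lemma pick_mem (h : Hist G) : availAct G a0 k h (pick G a0 k I h) ∧
    (pick G a0 k I h = some (state G a0 h (I h)) →
      ∀ j, j ≠ I h → G.u j (refpt G a0 h) ≤ G.u j (state G a0 h)) :=
  (Finset.mem_filter.mp (pick_spec G a0 k I h).1).2

/-- The constructed strategy profile. -/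
noncomputable def sig : StratProfile G := fun i h =>
  if hc : NodeCond G a0 k I h then
    (if e : I h = i then e ▸ pick G a0 k I h else none)
  else none

lemma sig_eq {h : Hist G} (hc : NodeCond G a0 k I h) :
    sig G a0 k I (I h) h = pick G a0 k I h := by
  unfold sig
  rw [dif_pos hc, dif_pos rfl]

lemma sig_eq_none {h : Hist G} (hc : ¬ NodeCond G a0 k I h) (i : Fin n) :
    sig G a0 k I i h = none := by
  unfold sig
  rw [dif_neg hc]

lemma sig_valid (hadm : Admissible G a0 k I) (hn : 0 < n) :
    ValidProfile G a0 k I (sig G a0 k I) := by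
  intro h hh hnt
  have hc : NodeCond G a0 k I h := ⟨hh, hnt, length_le_bound G a0 k I hadm hn hh⟩
  rw [sig_eq G a0 k I hc]
  exact (pick_mem G a0 k I h).1

lemma sig_nhp (hadm : Admissible G a0 k I) (hn : 0 < n) :
    SatNHP G a0 k I (sig G a0 k I) := by
  intro h hh hnt hstay j hj
  have hc : NodeCond G a0 k I h := ⟨hh, hnt, length_le_bound G a0 k I hadm hn hh⟩
  rw [sig_eq G a0 k I hc] at hstay
  exact (pick_mem G a0 k I h).2 hstay j hj

lemma outcome_sig (hadm : Admissible G a0 k I) (hn : 0 < n) :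
    ∀ (m : ℕ) (h : Hist G), IsNode G a0 k I h → bound G k + 1 - h.length ≤ m →
      outcomeFrom G a0 k I (sig G a0 k I) h = val G a0 k I h := by
  intro m
  induction m with
  | zero =>
    intro h hh hm
    have := length_le_bound G a0 k I hadm hn hh
    omega
  | succ m ih =>
    intro h hh hm
    by_cases hterm : Terminal G a0 h
    · rw [outcomeFrom_of_terminal G a0 k I _ hterm,
        val_of_not_cond G a0 k I (fun hc => hc.2.1 hterm)]
    · have hlen := length_le_bound G a0 k I hadm hn hh
      have hc : NodeCond G a0 k I h := ⟨hh, hterm, hlen⟩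
      have hvalid := sig_valid G a0 k I hadm hn
      rw [outcomeFrom_step G a0 k I _ hadm hn hvalid hh hterm]
      have hmove : sig G a0 k I (I h) h = pick G a0 k I h := sig_eq G a0 k I hc
      rw [hmove]
      have hnode' : IsNode G a0 k I (h ++ [⟨I h, pick G a0 k I h⟩]) :=
        isNode_append G a0 k I hh hterm (pick_mem G a0 k I h).1
      exact (ih _ hnode' (by simp; omega)).trans (val_step G a0 k I hc).symm

lemma outcome_dev (hadm : Admissible G a0 k I) (hn : 0 < n) (i : Fin n)
    (π : StratProfile G) (hvalid : ValidProfile G a0 k I π) (hnhp : SatNHP G a0 k I π)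
    (hag : ∀ h : Hist G, I h ≠ i → π (I h) h = sig G a0 k I (I h) h) :
    ∀ (m : ℕ) (h : Hist G), IsNode G a0 k I h → bound G k + 1 - h.length ≤ m →
      G.u i (outcomeFrom G a0 k I π h) ≤ G.u i (val G a0 k I h) := by
  intro m
  induction m with
  | zero =>
    intro h hh hm
    have := length_le_bound G a0 k I hadm hn hh
    omega
  | succ m ih =>
    intro h hh hm
    by_cases hterm : Terminal G a0 h
    · rw [outcomeFrom_of_terminal G a0 k I _ hterm,
        val_of_not_cond G a0 k I (fun hc => hc.2.1 hterm)]
    · have hlen := length_le_bound G a0 k I hadm hn hh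
      have hc : NodeCond G a0 k I h := ⟨hh, hterm, hlen⟩
      have havail : availAct G a0 k h (π (I h) h) := hvalid h hh hterm
      have hnode' : IsNode G a0 k I (h ++ [⟨I h, π (I h) h⟩]) :=
        isNode_append G a0 k I hh hterm havail
      rw [outcomeFrom_step G a0 k I _ hadm hn hvalid hh hterm]
      have hstep := ih (h ++ [⟨I h, π (I h) h⟩]) hnode' (by simp; omega)
      refine le_trans hstep ?_
      by_cases hiI : I h = i
      · have hcA : π (I h) h ∈ AllowedF G a0 k I h := by
          refine Finset.mem_filter.mpr ⟨Finset.mem_univ _, havail, ?_⟩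
          exact hnhp h hh hterm
        subst hiI
        calc G.u (I h) (val G a0 k I (h ++ [⟨I h, π (I h) h⟩]))
            ≤ G.u (I h) (val G a0 k I (h ++ [⟨I h, pick G a0 k I h⟩])) :=
              (pick_spec G a0 k I h).2 _ hcA
        _ = G.u (I h) (val G a0 k I h) := by rw [← val_step G a0 k I hc]
      · have hmove : π (I h) h = pick G a0 k I h := by
          rw [hag h hiI, sig_eq G a0 k I hc]
        rw [hmove, ← val_step G a0 k I hc]

end Existence

/-- **Existence.** For every finite normal form game with strict
preferences, every initial reference point `a0`, every `k ≥ 1` and every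
admissible player function `I`, a no-harm equilibrium of `Γ(a0,k,I)` exists in
pure strategies. -/
theorem nhe_exists {n : ℕ} (hn : 2 ≤ n) (G : Game n) (hG : StrictPrefs G)
    (a0 : Profile G) (k : ℕ) (hk : 0 < k) (I : Hist G → Fin n)
    (hI : Admissible G a0 k I) :
    ∃ σ : StratProfile G, NHE G a0 k I σ := by
  have hn0 : 0 < n := by omega
  refine ⟨sig G a0 k I, sig_valid G a0 k I hI hn0, sig_nhp G a0 k I hI hn0, ?_⟩
  intro h hh hnt τ hvalid hnhp
  have hag : ∀ h' : Hist G, I h' ≠ I h →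
      (Function.update (sig G a0 k I) (I h) τ) (I h') h' = sig G a0 k I (I h') h' := by
    intro h' hne
    exact congrFun (Function.update_of_ne hne τ (sig G a0 k I)) h'
  have h3 := outcome_dev G a0 k I hI hn0 (I h) _ hvalid hnhp hag
      (bound G k + 1) h hh (Nat.sub_le _ _)
  have h2 := outcome_sig G a0 k I hI hn0 (bound G k + 1) h hh (Nat.sub_le _ _)
  rw [h2]
  exact h3

end NoHarm
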